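/- arXiv:math/0407184 — 4 statements merged into one kernel-verified Lean document; each statement's English description precedes it below -/
import Mathlib

section
/- Fix n ≥ 1, offsets c_0,…,c_{n−1} ∈ ℤ pairwise incongruent mod n, and skew shapes λ^(0)/μ^(0),…,λ^(n−1)/μ^(n−1). Let T be an n-tuple of semistandard skew tableaux of these shapes, and suppose some component contains two cells x = (row i, column j) and y = (row i+1, column j) in the same column with entries T(x) = r and T(y) = r + 1. Let T' be another n-tuple of semistandard skew tableaux of the same shapes obtained from T by changing the entry of exactly one cell from r to r + 1. Then inv_x(T) + inv_y(T) = inv_x(T') + inv_y(T'), where inv_z(S) denotes the number of inversions of S that involve the cell z. -/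
open Finset MvPolynomial

attribute [local instance] Classical.propDecidable

noncomputable section

/-- A skew shape `λ/μ`: a pair of Young diagrams with `μ ⊆ λ`. -/
structure SkewShape where
  outer : YoungDiagram
  inner : YoungDiagram
  le : inner ≤ outer

/-- The cells of a skew shape: cells of `λ` not in `μ`. -/
def SkewShape.cells (sh : SkewShape) : Finset (ℕ × ℕ) :=
  sh.outer.cells \ sh.inner.cells

/-- A horizontal strip has at most one cell in every column. -/
def SkewShape.IsHorizontalStrip (sh : SkewShape) : Prop :=
  ∀ i₁ i₂ j : ℕ, (i₁, j) ∈ sh.cells → (i₂, j) ∈ sh.cells → i₁ = i₂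

variable {n : ℕ}

/-- The cells of an `n`-tuple of skew shapes, tagged by component. -/
def allCells (sh : Fin n → SkewShape) : Finset (Fin n × ℕ × ℕ) :=
  Finset.univ.biUnion fun k =>
    (sh k).cells.map ⟨fun s => (k, s), fun _ _ h => congrArg Prod.snd h⟩

/-- The diagonal of a cell in row `i`, column `j` of component `k` is `n(j-i) + c k`. -/
def diag (c : Fin n → ℤ) (p : Fin n × ℕ × ℕ) : ℤ :=
  (n : ℤ) * ((p.2.2 : ℤ) - (p.2.1 : ℤ)) + c p.1

/-- `f` is a semistandard filling of the tuple of skew shapes: entries are positive on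
cells and zero elsewhere, rows weakly increase and columns strictly increase. -/
def IsSSYT (sh : Fin n → SkewShape) (f : Fin n × ℕ × ℕ → ℕ) : Prop :=
  (∀ p ∈ allCells sh, 1 ≤ f p) ∧
  (∀ p, p ∉ allCells sh → f p = 0) ∧
  (∀ (k : Fin n) (i j₁ j₂ : ℕ), j₁ ≤ j₂ → (k, i, j₁) ∈ allCells sh →
      (k, i, j₂) ∈ allCells sh → f (k, i, j₁) ≤ f (k, i, j₂)) ∧
  (∀ (k : Fin n) (i₁ i₂ j : ℕ), i₁ < i₂ → (k, i₁, j) ∈ allCells sh →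
      (k, i₂, j) ∈ allCells sh → f (k, i₁, j) < f (k, i₂, j))

/-- The finset of semistandard fillings of the tuple of shapes with entries in `{1,…,m}`. -/
def Tabs (sh : Fin n → SkewShape) (m : ℕ) : Finset (Fin n × ℕ × ℕ → ℕ) :=
  (((allCells sh).pi fun _ => Finset.Icc 1 m).image
      fun g p => if h : p ∈ allCells sh then g p h else 0).filter (IsSSYT sh)

/-- The number of inversions of a filling: pairs of cells `x, y` with
`f x < f y` and `0 < diag x - diag y < n`. -/
def inv (sh : Fin n → SkewShape) (c : Fin n → ℤ) (f : Fin n × ℕ × ℕ → ℕ) : ℕ :=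
  ((allCells sh ×ˢ allCells sh).filter fun pq =>
    f pq.1 < f pq.2 ∧ 0 < diag c pq.1 - diag c pq.2 ∧ diag c pq.1 - diag c pq.2 < n).card

/-- The number of cells with entry `i`. -/
def wt (sh : Fin n → SkewShape) (f : Fin n × ℕ × ℕ → ℕ) (i : ℕ) : ℕ :=
  ((allCells sh).filter fun p => f p = i).card

/-- The inversion generating function `Σ_T q^{inv T} x^T` in `ℤ[q][x₁,…,x_m]`. -/
def G (sh : Fin n → SkewShape) (c : Fin n → ℤ) (m : ℕ) :
    MvPolynomial (Fin m) (Polynomial ℤ) :=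
  ∑ f ∈ Tabs sh m, MvPolynomial.C (Polynomial.X ^ inv sh c f) *
    ∏ i : Fin m, MvPolynomial.X i ^ wt sh f ((i : ℕ) + 1)

end

/-- The number of inversions of `f` which involve the cell `z`. -/
def invAt (sh : Fin n → SkewShape) (c : Fin n → ℤ) (f : Fin n × ℕ × ℕ → ℕ)
    (z : Fin n × ℕ × ℕ) : ℕ :=
  ((allCells sh ×ˢ allCells sh).filter fun pq =>
    (f pq.1 < f pq.2 ∧ 0 < diag c pq.1 - diag c pq.2 ∧ diag c pq.1 - diag c pq.2 < n) ∧
    (pq.1 = z ∨ pq.2 = z)).card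

/-- Auxiliary involution swapping the pairs `(z, y)` and `(x, z)`. -/
def swapE {β : Type*} [DecidableEq β] (x y z : β) : β × β → β × β :=
  fun pq => if pq = (z, y) then (x, z) else if pq = (x, z) then (z, y) else pq

lemma swapE_one {β : Type*} [DecidableEq β] (x y z : β) : swapE x y z (z, y) = (x, z) := by
  simp [swapE]

lemma swapE_two {β : Type*} [DecidableEq β] (x y z : β) (hzx : z ≠ x) :
    swapE x y z (x, z) = (z, y) := by
  have hne1 : ((x, z) : β × β) ≠ (z, y) := fun h => hzx (congrArg Prod.fst h).symm
  simp [swapE, hne1]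

lemma swapE_three {β : Type*} [DecidableEq β] (x y z : β) (pq : β × β)
    (h1 : pq ≠ (z, y)) (h2 : pq ≠ (x, z)) : swapE x y z pq = pq := by
  simp [swapE, h1, h2]

lemma swapE_invol {β : Type*} [DecidableEq β] (x y z : β) (hzx : z ≠ x) (pq : β × β) :
    swapE x y z (swapE x y z pq) = pq := by
  have hne1 : ((x, z) : β × β) ≠ (z, y) := fun h => hzx (congrArg Prod.fst h).symm
  by_cases h1 : pq = (z, y)
  · rw [h1, swapE_one, swapE_two x y z hzx]
  · by_cases h2 : pq = (x, z)
    · rw [h2, swapE_two x y z hzx, swapE_one]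
    · rw [swapE_three x y z pq h1 h2, swapE_three x y z pq h1 h2]

set_option maxHeartbeats 1000000 in
/-- if a component of `T` contains a cell `x` with entry `r` with the cell `y`
directly below it carrying entry `r+1`, and `T'` is a semistandard filling obtained from `T`
by changing exactly one entry from `r` to `r+1`, then
`inv_x(T) + inv_y(T) = inv_x(T') + inv_y(T')`. -/
theorem stmt2 (n : ℕ) (hn : 1 ≤ n) (c : Fin n → ℤ)
    (hc : ∀ k l : Fin n, k ≠ l → c k % (n : ℤ) ≠ c l % (n : ℤ))
    (sh : Fin n → SkewShape) (f f' : Fin n × ℕ × ℕ → ℕ)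
    (hf : IsSSYT sh f) (hf' : IsSSYT sh f')
    (k : Fin n) (i j r : ℕ)
    (hx : (k, i, j) ∈ allCells sh) (hy : (k, i + 1, j) ∈ allCells sh)
    (hfx : f (k, i, j) = r) (hfy : f (k, i + 1, j) = r + 1)
    (z : Fin n × ℕ × ℕ) (hz : z ∈ allCells sh)
    (hzr : f z = r) (hz' : f' z = r + 1) (hrest : ∀ w, w ≠ z → f' w = f w) :
    invAt sh c f (k, i, j) + invAt sh c f (k, i + 1, j) =
      invAt sh c f' (k, i, j) + invAt sh c f' (k, i + 1, j) := by
  classical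
  set x : Fin n × ℕ × ℕ := (k, i, j) with hxdef
  set y : Fin n × ℕ × ℕ := (k, i + 1, j) with hydef
  have hxy : x ≠ y := by
    simp only [hxdef, hydef, Prod.mk.injEq, ne_eq]
    omega
  have hzy : z ≠ y := by
    intro h; rw [h, hfy] at hzr; omega
  have hfy' : f' y = r + 1 := by rw [hrest y (Ne.symm hzy), hfy]
  have hzx : z ≠ x := by
    intro h
    have h1 : f' x = r + 1 := h ▸ hz'
    have hcol : f' x < f' y := hf'.2.2.2 k i (i + 1) j (by omega) hx hy
    rw [h1, hfy'] at hcol; omega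
  have hfx' : f' x = r := by rw [hrest x (Ne.symm hzx), hfx]
  have hDxy : diag c x - diag c y = n := by
    rw [hxdef, hydef]; unfold _root_.diag; push_cast; ring
  -- combine the two inversion counts into one filter
  have key : ∀ g : Fin n × ℕ × ℕ → ℕ, g x = r → g y = r + 1 →
      invAt sh c g x + invAt sh c g y =
      ((allCells sh ×ˢ allCells sh).filter fun pq =>
        (g pq.1 < g pq.2 ∧ 0 < diag c pq.1 - diag c pq.2 ∧ diag c pq.1 - diag c pq.2 < n) ∧
        ((pq.1 = x ∨ pq.2 = x) ∨ (pq.1 = y ∨ pq.2 = y))).card := by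
    intro g hgx hgy
    unfold invAt
    rw [show ((allCells sh ×ˢ allCells sh).filter fun pq =>
        (g pq.1 < g pq.2 ∧ 0 < diag c pq.1 - diag c pq.2 ∧ diag c pq.1 - diag c pq.2 < n) ∧
        ((pq.1 = x ∨ pq.2 = x) ∨ (pq.1 = y ∨ pq.2 = y))) =
      ((allCells sh ×ˢ allCells sh).filter fun pq =>
        ((g pq.1 < g pq.2 ∧ 0 < diag c pq.1 - diag c pq.2 ∧ diag c pq.1 - diag c pq.2 < n) ∧
          (pq.1 = x ∨ pq.2 = x)) ∨
        ((g pq.1 < g pq.2 ∧ 0 < diag c pq.1 - diag c pq.2 ∧ diag c pq.1 - diag c pq.2 < n) ∧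
          (pq.1 = y ∨ pq.2 = y))) from Finset.filter_congr (by tauto)]
    rw [Finset.filter_or, Finset.card_union_of_disjoint]
    rw [Finset.disjoint_left]
    rintro ⟨p, q⟩ h1 h2
    simp only [Finset.mem_filter, Finset.mem_product] at h1 h2
    obtain ⟨-, ⟨hlt, hpos, hbnd⟩, hs1⟩ := h1
    obtain ⟨-, -, hs2⟩ := h2
    rcases hs1 with h | h <;> rcases hs2 with h' | h'
    · rw [h] at h'; exact hxy h'
    · rw [h, h', hDxy] at hbnd; exact absurd hbnd (lt_irrefl _)
    · rw [h', h, hgx, hgy] at hlt; omega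
    · rw [h] at h'; exact hxy h'
  rw [key f hfx hfy, key f' hfx' hfy']
  apply Finset.card_nbij' (swapE x y z) (swapE x y z)
  · rintro ⟨p, q⟩ hpq
    simp only [Finset.mem_coe, Finset.mem_filter, Finset.mem_product] at hpq
    obtain ⟨⟨hp, hq⟩, ⟨hlt, hpos, hbnd⟩, hside⟩ := hpq
    by_cases h1 : ((p, q) : (Fin n × ℕ × ℕ) × (Fin n × ℕ × ℕ)) = (z, y)
    · rw [Prod.mk.injEq] at h1
      obtain ⟨hpe, hqe⟩ := h1
      rw [hpe, hqe] at hpos hbnd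
      have hsw : swapE x y z ((p, q) : (Fin n × ℕ × ℕ) × (Fin n × ℕ × ℕ)) = (x, z) := by
        rw [hpe, hqe, swapE_one]
      rw [hsw]
      simp only [Finset.mem_coe, Finset.mem_filter, Finset.mem_product]
      refine ⟨⟨hx, hz⟩, ⟨?_, ?_, ?_⟩, Or.inl (Or.inl trivial)⟩
      · show f' x < f' z
        rw [hfx', hz']; omega
      · show (0 : ℤ) < diag c x - diag c z
        linarith
      · show diag c x - diag c z < (n : ℤ)
        linarith
    · by_cases h2 : ((p, q) : (Fin n × ℕ × ℕ) × (Fin n × ℕ × ℕ)) = (x, z)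
      · exfalso
        rw [Prod.mk.injEq] at h2
        obtain ⟨hpe, hqe⟩ := h2
        rw [hpe, hqe, hfx, hzr] at hlt; omega
      · rw [swapE_three x y z (p, q) h1 h2]
        have hpz : p ≠ z := by
          intro hpe
          rcases hside with (h | h) | (h | h)
          · rw [hpe] at h; exact hzx h
          · rw [hpe, hzr, h, hfx] at hlt; omega
          · rw [hpe] at h; exact hzy h
          · exact h1 (by rw [hpe, h])
        have hqz : q ≠ z := by
          intro hqe
          rcases hside with (h | h) | (h | h)
          · exact h2 (by rw [hqe, h])
          · rw [hqe] at h; exact hzx h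
          · rw [hqe, hzr, h, hfy] at hlt; omega
          · rw [hqe] at h; exact hzy h
        simp only [Finset.mem_coe, Finset.mem_filter, Finset.mem_product]
        exact ⟨⟨hp, hq⟩, ⟨by rw [hrest p hpz, hrest q hqz]; exact hlt, hpos, hbnd⟩, hside⟩
  · rintro ⟨p, q⟩ hpq
    simp only [Finset.mem_coe, Finset.mem_filter, Finset.mem_product] at hpq
    obtain ⟨⟨hp, hq⟩, ⟨hlt, hpos, hbnd⟩, hside⟩ := hpq
    by_cases h1 : ((p, q) : (Fin n × ℕ × ℕ) × (Fin n × ℕ × ℕ)) = (z, y)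
    · exfalso
      rw [Prod.mk.injEq] at h1
      obtain ⟨hpe, hqe⟩ := h1
      rw [hpe, hqe, hz', hfy'] at hlt; omega
    · by_cases h2 : ((p, q) : (Fin n × ℕ × ℕ) × (Fin n × ℕ × ℕ)) = (x, z)
      · rw [Prod.mk.injEq] at h2
        obtain ⟨hpe, hqe⟩ := h2
        rw [hpe, hqe] at hpos hbnd
        have hsw : swapE x y z ((p, q) : (Fin n × ℕ × ℕ) × (Fin n × ℕ × ℕ)) = (z, y) := by
          rw [hpe, hqe, swapE_two x y z hzx]
        rw [hsw]
        simp only [Finset.mem_coe, Finset.mem_filter, Finset.mem_product]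
        refine ⟨⟨hz, hy⟩, ⟨?_, ?_, ?_⟩, Or.inr (Or.inr trivial)⟩
        · show f z < f y
          rw [hzr, hfy]; omega
        · show (0 : ℤ) < diag c z - diag c y
          linarith
        · show diag c z - diag c y < (n : ℤ)
          linarith
      · rw [swapE_three x y z (p, q) h1 h2]
        have hpz : p ≠ z := by
          intro hpe
          rcases hside with (h | h) | (h | h)
          · rw [hpe] at h; exact hzx h
          · rw [hpe, hz', h, hfx'] at hlt; omega
          · rw [hpe] at h; exact hzy h
          · exact h1 (by rw [hpe, h])
        have hqz : q ≠ z := by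
          intro hqe
          rcases hside with (h | h) | (h | h)
          · exact h2 (by rw [hqe, h])
          · rw [hqe] at h; exact hzx h
          · rw [hqe, hz', h, hfy'] at hlt; omega
          · rw [hqe] at h; exact hzy h
        rw [hrest p hpz, hrest q hqz] at hlt
        simp only [Finset.mem_coe, Finset.mem_filter, Finset.mem_product]
        exact ⟨⟨hp, hq⟩, ⟨hlt, hpos, hbnd⟩, hside⟩
  · intro a _; exact swapE_invol x y z hzx a
  · intro a _; exact swapE_invol x y z hzx a
end

section
/- Fix n ≥ 1, offsets c_0,…,c_{n−1} ∈ ℤ pairwise incongruent mod n, and an n-tuple T of semistandard skew tableaux. Suppose some component contains cells x and y in the same column with y directly below x, and T(x) = r, T(y) = r + 1 (so diag(x) = diag(y) + n). Then for every cell z of T with entry T(z) ∈ {r, r+1} and diag(y) < diag(z) < diag(x), exactly one of the two pairs {x, z} and {y, z} forms an inversion of T, regardless of whether T(z) = r or T(z) = r + 1. -/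
open Finset MvPolynomial

attribute [local instance] Classical.propDecidable

/-- The ordered pair `(p, q)` is an inversion of `f`: `f p < f q` and
`0 < diag p - diag q < n`. -/
def IsInvPair (c : Fin n → ℤ) (f : Fin n × ℕ × ℕ → ℕ) (p q : Fin n × ℕ × ℕ) : Prop :=
  f p < f q ∧ 0 < diag c p - diag c q ∧ diag c p - diag c q < n

theorem diag_eq_diag_succ_row_add (c : Fin n → ℤ) (k : Fin n) (i j : ℕ) :
    diag c (k, i, j) = diag c (k, i + 1, j) + n := by
  simp only [_root_.diag]
  push_cast
  ring

/-- The pair with equal entries is never an inversion; the pair with different entries is one,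
because `diag y < diag z < diag x = diag y + n` puts its diagonal gap strictly between `0`
and `n`. -/
theorem xor_isInvPair_of_diag_mem_Ioo {c : Fin n → ℤ} {f : Fin n × ℕ × ℕ → ℕ}
    {x y z : Fin n × ℕ × ℕ} {r : ℕ} (hfx : f x = r) (hfy : f y = r + 1)
    (hxy : diag c x = diag c y + n) (hfz : f z = r ∨ f z = r + 1)
    (hyz : diag c y < diag c z) (hzx : diag c z < diag c x) :
    Xor (IsInvPair c f x z ∨ IsInvPair c f z x) (IsInvPair c f y z ∨ IsInvPair c f z y) := by
  unfold IsInvPair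
  rcases hfz with hfz | hfz
  · refine Or.inr ⟨Or.inr ⟨by omega, by omega, by omega⟩, ?_⟩
    rintro (⟨h, -⟩ | ⟨h, -⟩) <;> omega
  · refine Or.inl ⟨Or.inl ⟨by omega, by omega, by omega⟩, ?_⟩
    rintro (⟨h, -⟩ | ⟨h, -⟩) <;> omega

theorem stmt3_general (n : ℕ) (c : Fin n → ℤ)
    (f : Fin n × ℕ × ℕ → ℕ)
    (k : Fin n) (i j r : ℕ)
    (hfx : f (k, i, j) = r) (hfy : f (k, i + 1, j) = r + 1)
    (z : Fin n × ℕ × ℕ)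
    (hfz : f z = r ∨ f z = r + 1)
    (hd₁ : diag c (k, i + 1, j) < diag c z) (hd₂ : diag c z < diag c (k, i, j)) :
    Xor' (IsInvPair c f (k, i, j) z ∨ IsInvPair c f z (k, i, j))
         (IsInvPair c f (k, i + 1, j) z ∨ IsInvPair c f z (k, i + 1, j)) :=
  xor_isInvPair_of_diag_mem_Ioo hfx hfy (diag_eq_diag_succ_row_add c k i j) hfz hd₁ hd₂

/-- if a component of `T` contains a cell `x` with entry `r` with the cell `y`
directly below it carrying entry `r+1`, then for every cell `z` with entry `r` or `r+1` and
`diag y < diag z < diag x`, exactly one of the pairs `{x, z}` and `{y, z}` is an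
inversion of `T`. -/
theorem stmt3 (n : ℕ) (hn : 1 ≤ n) (c : Fin n → ℤ)
    (hc : ∀ k l : Fin n, k ≠ l → c k % (n : ℤ) ≠ c l % (n : ℤ))
    (sh : Fin n → SkewShape) (f : Fin n × ℕ × ℕ → ℕ) (hf : IsSSYT sh f)
    (k : Fin n) (i j r : ℕ)
    (hx : (k, i, j) ∈ allCells sh) (hy : (k, i + 1, j) ∈ allCells sh)
    (hfx : f (k, i, j) = r) (hfy : f (k, i + 1, j) = r + 1)
    (z : Fin n × ℕ × ℕ) (hz : z ∈ allCells sh)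
    (hfz : f z = r ∨ f z = r + 1)
    (hd₁ : diag c (k, i + 1, j) < diag c z) (hd₂ : diag c z < diag c (k, i, j)) :
    Xor' (IsInvPair c f (k, i, j) z ∨ IsInvPair c f z (k, i, j))
         (IsInvPair c f (k, i + 1, j) z ∨ IsInvPair c f z (k, i + 1, j)) :=
  stmt3_general n c f k i j r hfx hfy z hfz hd₁ hd₂
end

section
/- Fix n ≥ 1, offsets c_0,…,c_{n−1} ∈ ℤ pairwise incongruent mod n, and skew shapes λ^(0)/μ^(0),…,λ^(n−1)/μ^(n−1), each a horizontal strip (at most one cell in every column), with at least one cell in total. Then: (i) the diagonals of the cells of the n-tuple of shapes are pairwise distinct; (ii) letting d_1 < d_2 < ⋯ < d_m enumerate the integers from the smallest to the largest occurring diagonal, the map sending an n-tuple T of semistandard skew tableaux of these shapes with entries in {1,2} to the sequence (a_1,…,a_m), where a_i is the entry of the cell with diagonal d_i if such a cell exists and a_i = ∅ otherwise, is a bijection from such n-tuples onto the set of (1,2,∅)-words of length m whose form is F = {i : no cell has diagonal d_i}; moreover under this bijection the number of cells of T with entry j equals μ_j for j = 1, 2, and inv(T) = linv_n(a). -/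
open Finset MvPolynomial

attribute [local instance] Classical.propDecidable

noncomputable section

variable {n : ℕ}

/-- A `(1,2,∅)`-word of length `m`, where the letter `∅` is encoded by `0`:
all letters lie in `{0,1,2}` and a `2` in position `i` forbids a `1` in position `i + n`. -/
def IsWord (n m : ℕ) (a : Fin m → ℕ) : Prop :=
  (∀ i, a i ≤ 2) ∧ ∀ i j : Fin m, (j : ℕ) = (i : ℕ) + n → a i = 2 → a j ≠ 1

/-- The form of a word: the set of positions holding the letter `∅` (encoded `0`). -/
def form (m : ℕ) (a : Fin m → ℕ) : Finset (Fin m) :=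
  Finset.univ.filter fun i => a i = 0

/-- The number of `n`-local inversions: pairs `i < j` with `j - i < n`, `a i = 2`,
`a j = 1`. -/
def linv (n m : ℕ) (a : Fin m → ℕ) : ℕ :=
  ((Finset.univ ×ˢ Finset.univ : Finset (Fin m × Fin m)).filter fun p =>
    (p.1 : ℕ) < (p.2 : ℕ) ∧ (p.2 : ℕ) - (p.1 : ℕ) < n ∧ a p.1 = 2 ∧ a p.2 = 1).card

/-- The `(1,2,∅)`-words of length `m` with form `F` and weight `(μ₁, μ₂)`. -/
noncomputable def words (n m : ℕ) (F : Finset (Fin m)) (μ₁ μ₂ : ℕ) :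
    Finset (Fin m → ℕ) :=
  (Fintype.piFinset fun _ : Fin m => ({0, 1, 2} : Finset ℕ)).filter fun a =>
    IsWord n m a ∧ form m a = F ∧
    (Finset.univ.filter fun i => a i = 1).card = μ₁ ∧
    (Finset.univ.filter fun i => a i = 2).card = μ₂

/-- The `(1,2,∅)`-word of a filling `f`, with respect to the list of diagonals
`dmin, dmin + 1, …`: position `i` holds the entry of the unique cell with diagonal
`dmin + i` if there is one, and `∅` (encoded `0`) otherwise.  (The sum below has at
most one term when all diagonals are distinct.) -/
def wordOf (sh : Fin n → SkewShape) (c : Fin n → ℤ) (dmin : ℤ) (m : ℕ)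
    (f : Fin n × ℕ × ℕ → ℕ) : Fin m → ℕ :=
  fun i => ∑ p ∈ (allCells sh).filter fun p => diag c p = dmin + (i : ℕ), f p

/-!
In a horizontal strip every row lies strictly to the left of the rows above it, so the content
`j - i` of a cell drops by at least two from one row to the next and determines the cell. As the
offsets are incongruent mod `n`, a diagonal determines the component (`diag ≡ c_k mod n`) and then
the content. Hence diagonals are distinct, and two cells whose diagonals differ by exactly `n` are
neighbours in one row. A filling of the strips with entries in `{1,2}` is therefore semistandard
iff no `2` stands directly left of a `1`, i.e. iff no `2` on diagonal `d` faces a `1` on diagonal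
`d + n`: this is the defining condition of a `(1,2,∅)`-word, and inversions of the tableau
correspond to the `n`-local inversions of its word.
-/

namespace SkewShape

theorem mem_cells_of_le_of_le {sh : SkewShape} {i₁ j₁ i₂ j₂ i j : ℕ}
    (h₁ : (i₁, j₁) ∈ sh.cells) (h₂ : (i₂, j₂) ∈ sh.cells)
    (hi₁ : i₁ ≤ i) (hi₂ : i ≤ i₂) (hj₁ : j₁ ≤ j) (hj₂ : j ≤ j₂) : (i, j) ∈ sh.cells := by
  simp only [cells, mem_sdiff, YoungDiagram.mem_cells] at *
  exact ⟨sh.outer.up_left_mem hi₂ hj₂ h₂.1, fun h => h₁.2 (sh.inner.up_left_mem hi₁ hj₁ h)⟩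

namespace IsHorizontalStrip

variable {sh : SkewShape} {i₁ j₁ i₂ j₂ : ℕ}

theorem col_lt_of_row_lt (hsh : sh.IsHorizontalStrip) (h₁ : (i₁, j₁) ∈ sh.cells)
    (h₂ : (i₂, j₂) ∈ sh.cells) (hi : i₁ < i₂) : j₂ < j₁ := by
  by_contra! hj
  have := hsh i₁ (i₁ + 1) j₁ h₁ (mem_cells_of_le_of_le h₁ h₂ (Nat.le_succ i₁) hi le_rfl hj)
  omega

theorem row_eq_of_content_le_of_le_add_one (hsh : sh.IsHorizontalStrip)
    (h₁ : (i₁, j₁) ∈ sh.cells) (h₂ : (i₂, j₂) ∈ sh.cells)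
    (hle : (j₁ : ℤ) - i₁ ≤ j₂ - i₂) (hle' : (j₂ : ℤ) - i₂ ≤ j₁ - i₁ + 1) : i₁ = i₂ := by
  rcases lt_trichotomy i₁ i₂ with hi | hi | hi
  · have := hsh.col_lt_of_row_lt h₁ h₂ hi
    omega
  · exact hi
  · have := hsh.col_lt_of_row_lt h₂ h₁ hi
    omega

end IsHorizontalStrip

end SkewShape

section Cells

variable {n : ℕ} {sh : Fin n → SkewShape} {c : Fin n → ℤ}

theorem mem_allCells {k : Fin n} {s : ℕ × ℕ} : (k, s) ∈ allCells sh ↔ s ∈ (sh k).cells := by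
  simp only [allCells, mem_biUnion, mem_univ, true_and, mem_map]
  exact ⟨fun ⟨_, _, h, he⟩ => by cases he; exact h, fun h => ⟨k, s, h, rfl⟩⟩

theorem diag_emod (p : Fin n × ℕ × ℕ) : diag c p % n = c p.1 % n := by
  rw [_root_.diag, add_comm, Int.add_mul_emod_self_left]

theorem eq_of_diag_eq_add_mul (hc : ∀ k l : Fin n, k ≠ l → c k % (n : ℤ) ≠ c l % (n : ℤ))
    (hstrip : ∀ k, (sh k).IsHorizontalStrip) {p q : Fin n × ℕ × ℕ}
    (hp : p ∈ allCells sh) (hq : q ∈ allCells sh) {t : ℕ} (ht : t ≤ 1)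
    (h : diag c q = diag c p + n * t) : q = (p.1, p.2.1, p.2.2 + t) := by
  obtain ⟨k, i₁, j₁⟩ := p
  obtain ⟨l, i₂, j₂⟩ := q
  obtain rfl : k = l := by
    by_contra hkl
    apply hc k l hkl
    rw [← diag_emod (k, i₁, j₁), ← diag_emod (l, i₂, j₂), h, Int.add_mul_emod_self_left]
  have hn : (n : ℤ) ≠ 0 := by
    have := k.pos
    positivity
  have hcontent : (j₂ : ℤ) - i₂ = j₁ - i₁ + t := by
    simp only [_root_.diag] at h
    apply mul_left_cancel₀ hn
    linarith
  rw [mem_allCells] at hp hq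
  obtain rfl := (hstrip k).row_eq_of_content_le_of_le_add_one hp hq (by omega) (by omega)
  simp only [Prod.mk.injEq, true_and]
  omega

theorem diag_injOn (hc : ∀ k l : Fin n, k ≠ l → c k % (n : ℤ) ≠ c l % (n : ℤ))
    (hstrip : ∀ k, (sh k).IsHorizontalStrip) : Set.InjOn (diag c) (allCells sh) :=
  fun p hp q hq h => by
    simpa using (eq_of_diag_eq_add_mul (t := 0) hc hstrip hp hq zero_le_one (by simp [h])).symm

theorem row_mono_of_le_succ {f : Fin n × ℕ × ℕ → ℕ}
    (hf : ∀ k i j, (k, i, j) ∈ allCells sh → (k, i, j + 1) ∈ allCells sh →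
      f (k, i, j) ≤ f (k, i, j + 1))
    (k : Fin n) (i j₁ j₂ : ℕ) (hj : j₁ ≤ j₂) (h₁ : (k, i, j₁) ∈ allCells sh)
    (h₂ : (k, i, j₂) ∈ allCells sh) : f (k, i, j₁) ≤ f (k, i, j₂) := by
  induction j₂, hj using Nat.le_induction with
  | base => exact le_rfl
  | succ j hj ih =>
    have hmid : (k, i, j) ∈ allCells sh := by
      rw [mem_allCells] at *
      exact SkewShape.mem_cells_of_le_of_le h₁ h₂ le_rfl le_rfl hj (Nat.le_succ j)
    exact (ih hmid).trans (hf k i j hmid h₂)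

theorem mem_Tabs_iff {m : ℕ} {f : Fin n × ℕ × ℕ → ℕ} :
    f ∈ Tabs sh m ↔ IsSSYT sh f ∧ ∀ p ∈ allCells sh, f p ≤ m := by
  rw [Tabs, mem_filter, mem_image]
  constructor
  · rintro ⟨⟨g, hg, rfl⟩, hs⟩
    refine ⟨hs, fun p hp => ?_⟩
    simp only [dif_pos hp]
    exact (mem_Icc.1 (mem_pi.1 hg p hp)).2
  · rintro ⟨hs, hle⟩
    refine ⟨⟨fun p _ => f p, mem_pi.2 fun p hp => mem_Icc.2 ⟨hs.1 p hp, hle p hp⟩, ?_⟩, hs⟩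
    funext p
    split_ifs with hp
    · rfl
    · exact (hs.2.1 p hp).symm

end Cells

theorem injective_add_val (d : ℤ) (m : ℕ) : Function.Injective fun i : Fin m => d + (i : ℕ) :=
  fun i j h => Fin.ext (by simpa using h)

section Word

variable {n : ℕ} {sh : Fin n → SkewShape} {c : Fin n → ℤ} {dmin : ℤ} {m : ℕ}
  {f : Fin n × ℕ × ℕ → ℕ}

theorem wordOf_eq_of_diag_eq (hinj : Set.InjOn (diag c) (allCells sh))
    {p : Fin n × ℕ × ℕ} (hp : p ∈ allCells sh) {i : Fin m} (hi : diag c p = dmin + (i : ℕ)) :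
    wordOf sh c dmin m f i = f p := by
  have : (allCells sh).filter (fun q => diag c q = dmin + (i : ℕ)) = {p} :=
    eq_singleton_iff_unique_mem.2 ⟨mem_filter.2 ⟨hp, hi⟩, fun q hq =>
      hinj (mem_filter.1 hq).1 hp ((mem_filter.1 hq).2.trans hi.symm)⟩
  rw [wordOf, this, sum_singleton]

theorem wordOf_eq_zero {i : Fin m} (h : ∀ p ∈ allCells sh, diag c p ≠ dmin + (i : ℕ)) :
    wordOf sh c dmin m f i = 0 := by
  rw [wordOf, filter_false_of_mem h, sum_empty]

theorem exists_diag_eq_of_wordOf_ne_zero {i : Fin m} (h : wordOf sh c dmin m f i ≠ 0) :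
    ∃ p ∈ allCells sh, diag c p = dmin + (i : ℕ) := by
  by_contra! h'
  exact h (wordOf_eq_zero h')

theorem exists_diag_eq_add (hbound : ∀ p ∈ allCells sh, dmin ≤ diag c p ∧ diag c p < dmin + m)
    {p : Fin n × ℕ × ℕ} (hp : p ∈ allCells sh) : ∃ i : Fin m, diag c p = dmin + (i : ℕ) := by
  obtain ⟨h₁, h₂⟩ := hbound p hp
  exact ⟨⟨(diag c p - dmin).toNat, by omega⟩, by simp only; omega⟩

theorem exists_wordOf_eq_iff (hinj : Set.InjOn (diag c) (allCells sh))
    (hbound : ∀ p ∈ allCells sh, dmin ≤ diag c p ∧ diag c p < dmin + m)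
    {v : ℕ} (hv : v ≠ 0) (d : ℤ) :
    (∃ i : Fin m, wordOf sh c dmin m f i = v ∧ dmin + (i : ℕ) = d) ↔
      ∃ p ∈ allCells sh, f p = v ∧ diag c p = d := by
  constructor
  · rintro ⟨i, hi, rfl⟩
    obtain ⟨p, hp, hpi⟩ := exists_diag_eq_of_wordOf_ne_zero (hi ▸ hv)
    exact ⟨p, hp, (wordOf_eq_of_diag_eq hinj hp hpi).symm.trans hi, hpi⟩
  · rintro ⟨p, hp, hpv, rfl⟩
    obtain ⟨i, hi⟩ := exists_diag_eq_add hbound hp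
    exact ⟨i, (wordOf_eq_of_diag_eq hinj hp hi).trans hpv, hi.symm⟩

theorem wt_eq_card_wordOf (hinj : Set.InjOn (diag c) (allCells sh))
    (hbound : ∀ p ∈ allCells sh, dmin ≤ diag c p ∧ diag c p < dmin + m)
    {v : ℕ} (hv : v ≠ 0) :
    wt sh f v = (univ.filter fun i => wordOf sh c dmin m f i = v).card := by
  have key : ((allCells sh).filter (f · = v)).image (diag c) =
      (univ.filter fun i => wordOf sh c dmin m f i = v).map ⟨_, injective_add_val dmin m⟩ := by
    ext d
    simpa [and_assoc] using (exists_wordOf_eq_iff hinj hbound hv d).symm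
  rw [wt, ← card_image_of_injOn (hinj.mono (filter_subset _ _)), key, card_map]

theorem inv_eq_linv_wordOf (hinj : Set.InjOn (diag c) (allCells sh))
    (hbound : ∀ p ∈ allCells sh, dmin ≤ diag c p ∧ diag c p < dmin + m)
    (hf : ∀ p ∈ allCells sh, f p = 1 ∨ f p = 2) :
    inv sh c f = linv n m (wordOf sh c dmin m f) := by
  let e : Fin m × Fin m ↪ ℤ × ℤ :=
    ⟨fun ij => (dmin + (ij.2 : ℕ), dmin + (ij.1 : ℕ)), fun ij ij' h => by
      simp only [Prod.mk.injEq] at h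
      exact Prod.ext (injective_add_val dmin m h.2) (injective_add_val dmin m h.1)⟩
  have key : ((allCells sh ×ˢ allCells sh).filter fun pq =>
        f pq.1 < f pq.2 ∧ 0 < diag c pq.1 - diag c pq.2 ∧ diag c pq.1 - diag c pq.2 < n).image
        (Prod.map (diag c) (diag c)) =
      ((univ ×ˢ univ : Finset (Fin m × Fin m)).filter fun ij =>
        (ij.1 : ℕ) < ij.2 ∧ (ij.2 : ℕ) - ij.1 < n ∧
          wordOf sh c dmin m f ij.1 = 2 ∧ wordOf sh c dmin m f ij.2 = 1).map e := by
    ext ⟨dx, dy⟩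
    simp only [mem_image, mem_map, mem_filter, mem_product, mem_univ, true_and]
    constructor
    · rintro ⟨⟨x, y⟩, ⟨⟨hx, hy⟩, hlt, hpos, hlt'⟩, he⟩
      cases he
      dsimp only at hlt hpos hlt'
      have hfx : f x = 1 := by rcases hf x hx with h | h <;> rcases hf y hy with h' | h' <;> omega
      have hfy : f y = 2 := by rcases hf x hx with h | h <;> rcases hf y hy with h' | h' <;> omega
      obtain ⟨j, hj, hjx⟩ := (exists_wordOf_eq_iff hinj hbound one_ne_zero _).2 ⟨x, hx, hfx, rfl⟩
      obtain ⟨i, hi, hiy⟩ := (exists_wordOf_eq_iff hinj hbound two_ne_zero _).2 ⟨y, hy, hfy, rfl⟩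
      refine ⟨(i, j), ⟨?_, ?_, hi, hj⟩, Prod.ext hjx hiy⟩ <;> dsimp only <;> omega
    · rintro ⟨⟨i, j⟩, ⟨hij, hlt, hi, hj⟩, he⟩
      cases he
      dsimp only at hij hlt hi hj
      obtain ⟨x, hx, hfx, hxj⟩ := (exists_wordOf_eq_iff hinj hbound one_ne_zero _).1 ⟨j, hj, rfl⟩
      obtain ⟨y, hy, hfy, hyi⟩ := (exists_wordOf_eq_iff hinj hbound two_ne_zero _).1 ⟨i, hi, rfl⟩
      refine ⟨(x, y), ⟨⟨hx, hy⟩, ?_, ?_, ?_⟩, Prod.ext hxj hyi⟩ <;> dsimp only <;> omega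
  rw [inv, linv, ← card_map e, ← key, card_image_of_injOn]
  rintro ⟨x, y⟩ hxy ⟨x', y'⟩ hxy' h
  simp only [coe_filter, mem_product, Set.mem_ofPred_eq] at hxy hxy'
  simp only [Prod.map_apply, Prod.mk.injEq] at h
  exact Prod.ext (hinj hxy.1.1 hxy'.1.1 h.1) (hinj hxy.1.2 hxy'.1.2 h.2)

theorem isWord_wordOf (hc : ∀ k l : Fin n, k ≠ l → c k % (n : ℤ) ≠ c l % (n : ℤ))
    (hstrip : ∀ k, (sh k).IsHorizontalStrip) (hf : f ∈ Tabs sh 2) :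
    IsWord n m (wordOf sh c dmin m f) := by
  obtain ⟨hssyt, hle⟩ := mem_Tabs_iff.1 hf
  have hinj := diag_injOn hc hstrip
  refine ⟨fun i => ?_, fun i j hij h2 h1 => ?_⟩
  · by_cases h : wordOf sh c dmin m f i = 0
    · omega
    · obtain ⟨p, hp, hpi⟩ := exists_diag_eq_of_wordOf_ne_zero h
      rw [wordOf_eq_of_diag_eq hinj hp hpi]
      exact hle p hp
  · obtain ⟨⟨k, r, s⟩, hp, hpi⟩ := exists_diag_eq_of_wordOf_ne_zero (ne_of_eq_of_ne h2 two_ne_zero)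
    obtain ⟨q, hq, hqj⟩ := exists_diag_eq_of_wordOf_ne_zero (ne_of_eq_of_ne h1 one_ne_zero)
    obtain rfl : q = (k, r, s + 1) :=
      eq_of_diag_eq_add_mul hc hstrip hp hq le_rfl (by rw [hpi, hqj, hij]; push_cast; ring)
    have := hssyt.2.2.1 k r s (s + 1) (Nat.le_succ s) hp hq
    rw [wordOf_eq_of_diag_eq hinj hp hpi] at h2
    rw [wordOf_eq_of_diag_eq hinj hq hqj] at h1
    omega

theorem form_wordOf (hinj : Set.InjOn (diag c) (allCells sh)) (hf : IsSSYT sh f) :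
    form m (wordOf sh c dmin m f) =
      univ.filter fun i : Fin m => ∀ p ∈ allCells sh, diag c p ≠ dmin + (i : ℕ) := by
  ext i
  simp only [form, mem_filter, mem_univ, true_and]
  refine ⟨fun h0 p hp hpi => ?_, wordOf_eq_zero⟩
  have := hf.1 p hp
  rw [wordOf_eq_of_diag_eq hinj hp hpi] at h0
  omega

theorem wordOf_injOn (hinj : Set.InjOn (diag c) (allCells sh))
    (hbound : ∀ p ∈ allCells sh, dmin ≤ diag c p ∧ diag c p < dmin + m) (k : ℕ) :
    Set.InjOn (wordOf sh c dmin m) (Tabs sh k) := by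
  intro f hf g hg hfg
  funext p
  by_cases hp : p ∈ allCells sh
  · obtain ⟨i, hi⟩ := exists_diag_eq_add hbound hp
    rw [← wordOf_eq_of_diag_eq (f := f) hinj hp hi, ← wordOf_eq_of_diag_eq (f := g) hinj hp hi,
      hfg]
  · rw [(mem_Tabs_iff.1 hf).1.2.1 p hp, (mem_Tabs_iff.1 hg).1.2.1 p hp]

end Word

def fillingOf {n : ℕ} (sh : Fin n → SkewShape) (c : Fin n → ℤ) (dmin : ℤ) (m : ℕ)
    (a : Fin m → ℕ) : Fin n × ℕ × ℕ → ℕ := fun p =>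
  if p ∈ allCells sh then Function.extend (fun i : Fin m => dmin + (i : ℕ)) a 0 (diag c p) else 0

section Filling

variable {n : ℕ} {sh : Fin n → SkewShape} {c : Fin n → ℤ} {dmin : ℤ} {m : ℕ} {a : Fin m → ℕ}

theorem fillingOf_apply {p : Fin n × ℕ × ℕ} (hp : p ∈ allCells sh) {i : Fin m}
    (hi : diag c p = dmin + (i : ℕ)) : fillingOf sh c dmin m a p = a i := by
  rw [fillingOf, if_pos hp, hi]
  exact (injective_add_val dmin m).extend_apply a 0 i

theorem eq_zero_iff_of_form_eq
    (hform : form m a = univ.filter fun i : Fin m => ∀ p ∈ allCells sh, diag c p ≠ dmin + (i : ℕ))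
    (i : Fin m) : a i = 0 ↔ ∀ p ∈ allCells sh, diag c p ≠ dmin + (i : ℕ) := by
  simpa [form] using Finset.ext_iff.1 hform i

theorem fillingOf_mem_Tabs (hstrip : ∀ k, (sh k).IsHorizontalStrip)
    (hbound : ∀ p ∈ allCells sh, dmin ≤ diag c p ∧ diag c p < dmin + m) (ha : IsWord n m a)
    (hform : form m a = univ.filter fun i : Fin m => ∀ p ∈ allCells sh, diag c p ≠ dmin + (i : ℕ)) :
    fillingOf sh c dmin m a ∈ Tabs sh 2 := by
  have hne : ∀ p ∈ allCells sh, ∀ i : Fin m, diag c p = dmin + (i : ℕ) → a i ≠ 0 :=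
    fun p hp i hi h0 => (eq_zero_iff_of_form_eq hform i).1 h0 p hp hi
  have hsucc : ∀ k r s, (k, r, s) ∈ allCells sh → (k, r, s + 1) ∈ allCells sh →
      fillingOf sh c dmin m a (k, r, s) ≤ fillingOf sh c dmin m a (k, r, s + 1) := by
    intro k r s hp hq
    obtain ⟨i, hi⟩ := exists_diag_eq_add hbound hp
    obtain ⟨j, hj⟩ := exists_diag_eq_add hbound hq
    have hij : (j : ℕ) = i + n := by
      have : diag c (k, r, s + 1) = diag c (k, r, s) + n := by
        simp only [_root_.diag]
        push_cast
        ring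
      omega
    rw [fillingOf_apply hp hi, fillingOf_apply hq hj]
    have := ha.1 i
    have := hne _ hq j hj
    by_cases h2 : a i = 2
    · have := ha.2 i j hij h2
      omega
    · omega
  rw [mem_Tabs_iff]
  refine ⟨⟨fun p hp => ?_, fun p hp => if_neg hp, row_mono_of_le_succ hsucc,
    fun k i₁ i₂ j hi h₁ h₂ => absurd (hstrip k i₁ i₂ j (mem_allCells.1 h₁) (mem_allCells.1 h₂))
      hi.ne⟩, fun p hp => ?_⟩ <;>
  obtain ⟨i, hi⟩ := exists_diag_eq_add hbound hp <;>
  rw [fillingOf_apply hp hi]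
  · exact Nat.one_le_iff_ne_zero.2 (hne p hp i hi)
  · exact ha.1 i

theorem wordOf_fillingOf (hinj : Set.InjOn (diag c) (allCells sh))
    (hform : form m a = univ.filter fun i : Fin m => ∀ p ∈ allCells sh, diag c p ≠ dmin + (i : ℕ)) :
    wordOf sh c dmin m (fillingOf sh c dmin m a) = a := by
  funext i
  by_cases h : ∀ p ∈ allCells sh, diag c p ≠ dmin + (i : ℕ)
  · rw [wordOf_eq_zero h, (eq_zero_iff_of_form_eq hform i).2 h]
  · push Not at h
    obtain ⟨p, hp, hpi⟩ := h
    rw [wordOf_eq_of_diag_eq hinj hp hpi, fillingOf_apply hp hpi]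

end Filling

theorem stmt10_general (n : ℕ) (c : Fin n → ℤ)
    (hc : ∀ k l : Fin n, k ≠ l → c k % (n : ℤ) ≠ c l % (n : ℤ))
    (sh : Fin n → SkewShape) (hstrip : ∀ k, (sh k).IsHorizontalStrip)
    (hne : (allCells sh).Nonempty)
    (dmin dmax : ℤ)
    (hdmin : dmin = (((allCells sh).image (diag c)).min' (hne.image _)))
    (hdmax : dmax = (((allCells sh).image (diag c)).max' (hne.image _)))
    (m : ℕ) (hm : (m : ℤ) = dmax - dmin + 1) :
    (∀ p ∈ allCells sh, ∀ q ∈ allCells sh, diag c p = diag c q → p = q) ∧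
    Set.BijOn (wordOf sh c dmin m) ↑(Tabs sh 2)
      {a : Fin m → ℕ | IsWord n m a ∧
        form m a = Finset.univ.filter fun i : Fin m =>
          ∀ p ∈ allCells sh, diag c p ≠ dmin + (i : ℕ)} ∧
    ∀ f ∈ Tabs sh 2,
      wt sh f 1 = (Finset.univ.filter fun i => wordOf sh c dmin m f i = 1).card ∧
      wt sh f 2 = (Finset.univ.filter fun i => wordOf sh c dmin m f i = 2).card ∧
      inv sh c f = linv n m (wordOf sh c dmin m f) := by
  have hinj := diag_injOn hc hstrip
  have hbound : ∀ p ∈ allCells sh, dmin ≤ diag c p ∧ diag c p < dmin + m := fun p hp => by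
    have h₁ : dmin ≤ diag c p := hdmin ▸ min'_le _ _ (mem_image_of_mem _ hp)
    have h₂ : diag c p ≤ dmax := hdmax ▸ le_max' _ _ (mem_image_of_mem _ hp)
    omega
  refine ⟨fun p hp q hq => hinj hp hq,
    ⟨fun f hf => ⟨isWord_wordOf hc hstrip hf, form_wordOf hinj (mem_Tabs_iff.1 hf).1⟩,
      wordOf_injOn hinj hbound 2, fun a ⟨ha, hform⟩ =>
        ⟨fillingOf sh c dmin m a, fillingOf_mem_Tabs hstrip hbound ha hform,
          wordOf_fillingOf hinj hform⟩⟩,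
    fun f hf => ?_⟩
  have hf12 : ∀ p ∈ allCells sh, f p = 1 ∨ f p = 2 := fun p hp => by
    have := (mem_Tabs_iff.1 hf).1.1 p hp
    have := (mem_Tabs_iff.1 hf).2 p hp
    omega
  exact ⟨wt_eq_card_wordOf hinj hbound one_ne_zero, wt_eq_card_wordOf hinj hbound two_ne_zero,
    inv_eq_linv_wordOf hinj hbound hf12⟩

/-- for a nonempty `n`-tuple of horizontal strips, (i) the diagonals of the
cells are pairwise distinct, and (ii) with `d_1 < ⋯ < d_m` the integers from the smallest
to the largest occurring diagonal, `T ↦ wordOf T` is a bijection from semistandard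
fillings with entries in `{1,2}` onto the `(1,2,∅)`-words of length `m` whose form is
the set of positions whose diagonal is taken by no cell; moreover it transforms the
numbers of entries `1` and `2` into the weight of the word, and `inv` into `linv`. -/
theorem stmt10 (n : ℕ) (hn : 1 ≤ n) (c : Fin n → ℤ)
    (hc : ∀ k l : Fin n, k ≠ l → c k % (n : ℤ) ≠ c l % (n : ℤ))
    (sh : Fin n → SkewShape) (hstrip : ∀ k, (sh k).IsHorizontalStrip)
    (hne : (allCells sh).Nonempty)
    (dmin dmax : ℤ)
    (hdmin : dmin = (((allCells sh).image (diag c)).min' (hne.image _)))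
    (hdmax : dmax = (((allCells sh).image (diag c)).max' (hne.image _)))
    (m : ℕ) (hm : (m : ℤ) = dmax - dmin + 1) :
    (∀ p ∈ allCells sh, ∀ q ∈ allCells sh, diag c p = diag c q → p = q) ∧
    Set.BijOn (wordOf sh c dmin m) ↑(Tabs sh 2)
      {a : Fin m → ℕ | IsWord n m a ∧
        form m a = Finset.univ.filter fun i : Fin m =>
          ∀ p ∈ allCells sh, diag c p ≠ dmin + (i : ℕ)} ∧
    ∀ f ∈ Tabs sh 2,
      wt sh f 1 = (Finset.univ.filter fun i => wordOf sh c dmin m f i = 1).card ∧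
      wt sh f 2 = (Finset.univ.filter fun i => wordOf sh c dmin m f i = 2).card ∧
      inv sh c f = linv n m (wordOf sh c dmin m f) :=
  stmt10_general n c hc sh hstrip hne dmin dmax hdmin hdmax m hm
end
end

section
/- Fix n ≥ 1 and m ≥ 0, and let a = (a_1,…,a_m) be a (1,2,∅)-word with empty form, i.e., every a_i ∈ {1,2} and a_i = 2 implies a_{i+n} ≠ 1 whenever i + n ≤ m. Define b = (b_1,…,b_m) by b_i = 3 − a_{m+1−i} (reverse the sequence and interchange 1's and 2's). Then: (i) b is again a (1,2,∅)-word with empty form; (ii) the weight of b is (μ_2, μ_1) where (μ_1, μ_2) is the weight of a; (iii) linv_n(b) = linv_n(a); and (iv) the map a ↦ b is an involution. Consequently, Σ_a q^{linv_n(a)} over words of length m, empty form and weight (μ_1, μ_2) equals Σ_b q^{linv_n(b)} over words of length m, empty form and weight (μ_2, μ_1). -/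
open Finset

attribute [local instance] Classical.propDecidable

/-- Reverse a word and interchange the letters `1` and `2`. -/
def revMap (m : ℕ) (a : Fin m → ℕ) : Fin m → ℕ := fun i => 3 - a i.rev

/-!
Reversal sends positions `i < j` to `rev j < rev i` at the same distance, and the swap
`1 ↔ 2` exchanges the letters, so a `2` followed by a `1` at distance `d` in `a` corresponds
exactly to a `2` followed by a `1` at distance `d` in `b`. This preserves the word condition
and gives a bijection between `n`-local inversions; the weights are exchanged by the same
reversal on single positions, and the generating functions agree because `a ↦ b` is an
involution between the two sets of words.
-/

lemma Fin.card_filter_rev {m : ℕ} (p : Fin m → Prop) [DecidablePred p] :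
    #{i : Fin m | p i.rev} = #{i | p i} :=
  card_equiv Fin.revPerm fun i => by simp

namespace revMap

variable {n m : ℕ} {a : Fin m → ℕ}

lemma apply_eq_one_iff (i : Fin m) : revMap m a i = 1 ↔ a i.rev = 2 := by
  simp only [revMap]; omega

lemma apply_eq_two_iff (i : Fin m) : revMap m a i = 2 ↔ a i.rev = 1 := by
  simp only [revMap]; omega

lemma apply_eq_one_or_two (h : ∀ i, a i = 1 ∨ a i = 2) (i : Fin m) :
    revMap m a i = 1 ∨ revMap m a i = 2 := by
  simpa only [apply_eq_one_iff, apply_eq_two_iff, or_comm] using h i.rev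

lemma involutive (h : ∀ i, a i ≤ 3) : revMap m (revMap m a) = a := by
  funext i
  have := h i
  simp only [revMap, Fin.rev_rev]
  omega

lemma involutive_of_apply_eq_one_or_two (h : ∀ i, a i = 1 ∨ a i = 2) :
    revMap m (revMap m a) = a :=
  involutive fun i => by rcases h i with h | h <;> omega

lemma no_one_after_two (h : ∀ i j : Fin m, (j : ℕ) = (i : ℕ) + n → a i = 2 → a j ≠ 1)
    (i j : Fin m) (hij : (j : ℕ) = (i : ℕ) + n) :
    revMap m a i = 2 → revMap m a j ≠ 1 := by
  rw [apply_eq_two_iff, Ne, apply_eq_one_iff]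
  refine fun hi hj => h j.rev i.rev ?_ hj hi
  simp only [Fin.val_rev]
  omega

lemma card_filter_eq_one : #{i | revMap m a i = 1} = #{i | a i = 2} := by
  simpa only [apply_eq_one_iff] using Fin.card_filter_rev fun i => a i = 2

lemma card_filter_eq_two : #{i | revMap m a i = 2} = #{i | a i = 1} := by
  simpa only [apply_eq_two_iff] using Fin.card_filter_rev fun i => a i = 1

lemma linv_eq : linv n m (revMap m a) = linv n m a := by
  unfold linv
  refine card_nbij' (fun p => (p.2.rev, p.1.rev)) (fun p => (p.2.rev, p.1.rev))
    ?_ ?_ (fun _ _ => by simp) (fun _ _ => by simp)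
  all_goals
    rintro ⟨i, j⟩ hij
    simp only [coe_filter, mem_product, mem_univ, true_and, Set.mem_ofPred_eq,
      apply_eq_one_iff, apply_eq_two_iff, Fin.rev_rev, Fin.val_rev] at hij ⊢
    omega

end revMap

lemma mem_words_empty_iff {n m μ₁ μ₂ : ℕ} {a : Fin m → ℕ} :
    a ∈ words n m ∅ μ₁ μ₂ ↔
      (∀ i, a i = 1 ∨ a i = 2) ∧
      (∀ i j : Fin m, (j : ℕ) = (i : ℕ) + n → a i = 2 → a j ≠ 1) ∧
      #{i | a i = 1} = μ₁ ∧ #{i | a i = 2} = μ₂ := by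
  have hletters : (∀ i, a i ∈ ({0, 1, 2} : Finset ℕ)) ∧ (∀ i, a i ≤ 2) ∧ (∀ i, a i ≠ 0) ↔
      ∀ i, a i = 1 ∨ a i = 2 := by
    simp only [mem_insert, mem_singleton, ← forall_and]
    exact forall_congr' fun i => by omega
  simp only [words, IsWord, form, mem_filter, Fintype.mem_piFinset, filter_eq_empty_iff,
    mem_univ, true_implies, ← hletters]
  tauto

lemma revMap_mem_words {n m μ₁ μ₂ : ℕ} {a : Fin m → ℕ} (ha : a ∈ words n m ∅ μ₁ μ₂) :
    revMap m a ∈ words n m ∅ μ₂ μ₁ := by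
  obtain ⟨hletters, hword, rfl, rfl⟩ := mem_words_empty_iff.mp ha
  exact mem_words_empty_iff.mpr ⟨revMap.apply_eq_one_or_two hletters,
    revMap.no_one_after_two hword, revMap.card_filter_eq_one, revMap.card_filter_eq_two⟩

lemma revMap_involutive_of_mem_words {n m μ₁ μ₂ : ℕ} {a : Fin m → ℕ}
    (ha : a ∈ words n m ∅ μ₁ μ₂) : revMap m (revMap m a) = a :=
  revMap.involutive_of_apply_eq_one_or_two (mem_words_empty_iff.mp ha).1

theorem stmt11_general (n m : ℕ) :
    (∀ a : Fin m → ℕ, (∀ i, a i = 1 ∨ a i = 2) →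
      (∀ i j : Fin m, (j : ℕ) = (i : ℕ) + n → a i = 2 → a j ≠ 1) →
      ((∀ i, revMap m a i = 1 ∨ revMap m a i = 2) ∧
        (∀ i j : Fin m, (j : ℕ) = (i : ℕ) + n → revMap m a i = 2 → revMap m a j ≠ 1) ∧
        ((Finset.univ.filter fun i => revMap m a i = 1).card =
            (Finset.univ.filter fun i => a i = 2).card ∧
          (Finset.univ.filter fun i => revMap m a i = 2).card =
            (Finset.univ.filter fun i => a i = 1).card) ∧
        linv n m (revMap m a) = linv n m a ∧
        revMap m (revMap m a) = a)) ∧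
    ∀ μ₁ μ₂ : ℕ,
      ∑ a ∈ words n m ∅ μ₁ μ₂, (Polynomial.X : Polynomial ℤ) ^ linv n m a =
        ∑ b ∈ words n m ∅ μ₂ μ₁, (Polynomial.X : Polynomial ℤ) ^ linv n m b := by
  refine ⟨fun a hletters hword => ⟨revMap.apply_eq_one_or_two hletters,
    revMap.no_one_after_two hword, ⟨revMap.card_filter_eq_one, revMap.card_filter_eq_two⟩,
    revMap.linv_eq, revMap.involutive_of_apply_eq_one_or_two hletters⟩, fun μ₁ μ₂ => ?_⟩
  exact sum_nbij' (revMap m) (revMap m) (fun _ => revMap_mem_words)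
    (fun _ => revMap_mem_words) (fun _ => revMap_involutive_of_mem_words)
    (fun _ => revMap_involutive_of_mem_words) (fun _ _ => by rw [revMap.linv_eq])

/-- for a `(1,2,∅)`-word `a` with empty form, the word
`b i = 3 - a (rev i)` is again such a word (i), has the interchanged weight (ii), has
the same number of `n`-local inversions (iii), and `a ↦ b` is an involution (iv);
consequently the `linv` generating functions for weights `(μ₁, μ₂)` and `(μ₂, μ₁)`
over words with empty form agree. -/
theorem stmt11 (n m : ℕ) (hn : 1 ≤ n) :
    (∀ a : Fin m → ℕ, (∀ i, a i = 1 ∨ a i = 2) →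
      (∀ i j : Fin m, (j : ℕ) = (i : ℕ) + n → a i = 2 → a j ≠ 1) →
      ((∀ i, revMap m a i = 1 ∨ revMap m a i = 2) ∧
        (∀ i j : Fin m, (j : ℕ) = (i : ℕ) + n → revMap m a i = 2 → revMap m a j ≠ 1) ∧
        ((Finset.univ.filter fun i => revMap m a i = 1).card =
            (Finset.univ.filter fun i => a i = 2).card ∧
          (Finset.univ.filter fun i => revMap m a i = 2).card =
            (Finset.univ.filter fun i => a i = 1).card) ∧
        linv n m (revMap m a) = linv n m a ∧
        revMap m (revMap m a) = a)) ∧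
    ∀ μ₁ μ₂ : ℕ,
      ∑ a ∈ words n m ∅ μ₁ μ₂, (Polynomial.X : Polynomial ℤ) ^ linv n m a =
        ∑ b ∈ words n m ∅ μ₂ μ₁, (Polynomial.X : Polynomial ℤ) ^ linv n m b :=
  stmt11_general n m
end
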